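/- For every n ≥ 1 there exists an infinite sequence (x_i)_{i=0}^∞ of natural numbers that is an onion De Bruijn sequence of order n: for every k ≥ 1, the windows x_i x_{i+1} ... x_{i+n-1} for 0 ≤ i < k^n are pairwise distinct and enumerate exactly the set [k]^n. Moreover, such a sequence is obtained from the prefer-max construction: for every k ≥ 1, the reversal of the first k^n + n - 1 symbols of (x_i) equals the symbol string of the (k,n)-prefer-max cycle. -/

import Mathlib

/-- `preferMaxAux k n i` is the list of windows `[wᵢ, wᵢ₋₁, ..., w₀]` of the
`(k,n)`-prefer-max cycle, newest first.  The first window is `w₀ = 0^{n-1}(k-1)` and,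
if `wᵢ = σx`, then `wᵢ₊₁ = xτ` where `τ` is the maximal symbol in `[k] = {0,…,k-1}`
such that `xτ` has not appeared among `w₀,…,wᵢ` (computed via `Nat.findGreatest`,
which returns `0` if no such symbol exists; the existence of such a symbol at each
step is part of the correctness of the construction). -/
def preferMaxAux (k n : ℕ) : ℕ → List (List ℕ)
  | 0 => [List.replicate (n - 1) 0 ++ [k - 1]]
  | i + 1 =>
    let prev := preferMaxAux k n i
    let w := prev.headI
    (w.tail ++ [Nat.findGreatest (fun τ => (w.tail ++ [τ]) ∉ prev) (k - 1)]) :: prev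

/-- `preferMax k n i` is the `i`-th window `wᵢ` of the `(k,n)`-prefer-max cycle. -/
def preferMax (k n i : ℕ) : List ℕ := (preferMaxAux k n i).headI

/-- The window of length `n` of the infinite sequence `x` starting at position `i`,
namely the word `x i, x (i+1), …, x (i+n-1)`. -/
def window (x : ℕ → ℕ) (n i : ℕ) : List ℕ := (List.range n).map fun t => x (i + t)

/-- `x` is an onion De Bruijn sequence of order `n`: for every `k ≥ 1`, the `k^n`
windows of length `n` starting at positions `0,…,k^n - 1` are pairwise distinct and
constitute exactly the set `[k]^n` of words of length `n` over `{0,…,k-1}`. -/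
def IsOnionDeBruijn (x : ℕ → ℕ) (n : ℕ) : Prop :=
  ∀ k, 1 ≤ k →
    (∀ i < k ^ n, ∀ j < k ^ n, window x n i = window x n j → i = j) ∧
    (∀ w : List ℕ, (∃ i < k ^ n, window x n i = w) ↔ (w.length = n ∧ ∀ σ ∈ w, σ < k))

/-!
A word `u` of length `n` is the edge `u.dropLast → u.tail` of the De Bruijn graph on words of
length `n - 1`, and the `(k,n)`-prefer-max cycle is the greedy walk from `0ⁿ⁻¹` that always takes
the unused out-edge with the largest last symbol. The set of used edges stays closed under
raising the last symbol. If the walk gets stuck, all `k` out-edges of its vertex are used, so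
by counting degrees it is back at `0ⁿ⁻¹` and every vertex is balanced; a missing edge `σu` then
forces the edge `u0` to be missing as well, and `n` such shifts reach the missing edge `0ⁿ`,
which leaves `0ⁿ⁻¹`. Hence the walk uses all `kⁿ` edges exactly once.

For the onion property run the `(k+1)`-ary walk up to its first window avoiding `k`. Until then
every used edge contains `k`; the same counting shows that the walk is back at `0ⁿ⁻¹` and has
used every edge `vk` with `v` over `[k]`. From then on the top symbol is never available, so the
walk copies the `k`-ary walk, and counting edges locates this switch at step `(k+1)ⁿ - kⁿ`. So
the `(k,n)` symbol string is a suffix of the `(k+1,n)` one, their reversals form a chain of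
prefixes, and the onion sequence is their union.
-/

namespace PreferMax

variable {k n : ℕ}

def IsWord (k n : ℕ) (u : List ℕ) : Prop := u.length = n ∧ ∀ σ ∈ u, σ < k

lemma IsWord.reverse {u : List ℕ} (hu : IsWord k n u) : IsWord k n u.reverse :=
  ⟨by rw [List.length_reverse, hu.1], fun σ hσ => hu.2 σ (List.mem_reverse.mp hσ)⟩

lemma IsWord.mono {k' : ℕ} {u : List ℕ} (hu : IsWord k n u) (hk : k ≤ k') :
    IsWord k' n u :=
  ⟨hu.1, fun σ hσ => (hu.2 σ hσ).trans_le hk⟩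

lemma IsWord.tail {u : List ℕ} (hu : IsWord k n u) : IsWord k (n - 1) u.tail :=
  ⟨by rw [List.length_tail, hu.1], fun σ hσ => hu.2 σ (List.mem_of_mem_tail hσ)⟩

lemma IsWord.append_singleton {v : List ℕ} {σ : ℕ} (hn : 1 ≤ n)
    (hv : IsWord k (n - 1) v) (hσ : σ < k) : IsWord k n (v ++ [σ]) := by
  refine ⟨by simp only [List.length_append, hv.1, List.length_singleton]; omega, fun τ hτ => ?_⟩
  rcases List.mem_append.mp hτ with h | h
  · exact hv.2 τ h
  · rwa [List.mem_singleton.mp h]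

lemma IsWord.not_mem {u : List ℕ} (hu : IsWord k n u) : k ∉ u :=
  fun h => lt_irrefl k (hu.2 k h)

lemma isWord_replicate_zero (hk : 1 ≤ k) (m : ℕ) : IsWord k m (List.replicate m 0) :=
  ⟨List.length_replicate, fun σ hσ => by rw [List.eq_of_mem_replicate hσ]; omega⟩

def words (k : ℕ) : ℕ → List (List ℕ)
  | 0 => [[]]
  | n + 1 => (List.range k).flatMap fun σ => (words k n).map (σ :: ·)

lemma length_words (k : ℕ) : ∀ n, (words k n).length = k ^ n
  | 0 => rfl
  | n + 1 => by
    simp [words, List.length_flatMap, length_words k n, pow_succ, mul_comm]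

lemma mem_words : ∀ {n : ℕ} {u : List ℕ}, u ∈ words k n ↔ IsWord k n u
  | 0, u => by
    simp only [words, List.mem_singleton, IsWord, List.length_eq_zero_iff]
    exact ⟨fun h => ⟨h, by simp [h]⟩, And.left⟩
  | n + 1, [] => by simp [words, IsWord]
  | n + 1, σ :: u => by simp [words, IsWord, mem_words, and_comm, and_assoc, and_left_comm]

lemma nodup_words (k : ℕ) : ∀ n, (words k n).Nodup
  | 0 => List.nodup_singleton _
  | n + 1 => by
    refine List.nodup_flatMap.mpr ⟨fun σ _ => (nodup_words k n).map (List.cons_injective), ?_⟩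
    refine (List.nodup_range).imp fun hne u hu hu' => ?_
    simp only [List.mem_map] at hu hu'
    obtain ⟨_, _, rfl⟩ := hu
    obtain ⟨_, _, h⟩ := hu'
    exact hne (List.cons_eq_cons.mp h).1.symm

section Degrees

variable {L : List (List ℕ)}

def inDegree (L : List (List ℕ)) (v : List ℕ) : ℕ := L.countP (·.tail = v)

def outDegree (L : List (List ℕ)) (v : List ℕ) : ℕ := L.countP (·.dropLast = v)

lemma inDegree_cons (u : List ℕ) (L : List (List ℕ)) (v : List ℕ) :
    inDegree (u :: L) v = inDegree L v + if u.tail = v then 1 else 0 := by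
  simp [inDegree, List.countP_cons]

lemma outDegree_cons (u : List ℕ) (L : List (List ℕ)) (v : List ℕ) :
    outDegree (u :: L) v = outDegree L v + if u.dropLast = v then 1 else 0 := by
  simp [outDegree, List.countP_cons]

lemma inDegree_le_countP (hn : 1 ≤ n) (hL : L.Nodup) (hW : ∀ u ∈ L, IsWord k n u)
    (v : List ℕ) : inDegree L v ≤ (List.range k).countP (fun σ => σ :: v ∈ L) := by
  rw [inDegree, List.countP_eq_length_filter, List.countP_eq_length_filter,
    ← List.length_map (f := (· :: v))]
  refine ((hL.filter _).subperm fun u hu => ?_).length_le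
  obtain ⟨huL, rfl⟩ : u ∈ L ∧ u.tail = v := by simpa using hu
  obtain ⟨σ, w, rfl⟩ := List.exists_cons_of_length_pos (by rw [(hW u huL).1]; omega)
  exact List.mem_map.mpr ⟨σ, List.mem_filter.mpr
    ⟨List.mem_range.mpr ((hW _ huL).2 σ List.mem_cons_self), decide_eq_true huL⟩, rfl⟩

lemma inDegree_le (hn : 1 ≤ n) (hL : L.Nodup) (hW : ∀ u ∈ L, IsWord k n u) (v : List ℕ) :
    inDegree L v ≤ k :=
  (inDegree_le_countP hn hL hW v).trans (List.countP_le_length.trans_eq List.length_range)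

lemma inDegree_lt (hn : 1 ≤ n) (hL : L.Nodup) (hW : ∀ u ∈ L, IsWord k n u) {σ : ℕ}
    {v : List ℕ} (hσ : σ < k) (hσv : σ :: v ∉ L) : inDegree L v < k := by
  refine (inDegree_le_countP hn hL hW v).trans_lt ?_
  refine ((List.countP_lt_length_iff (p := fun σ => σ :: v ∈ L)).mpr ?_).trans_eq List.length_range
  exact ⟨σ, List.mem_range.mpr hσ, decide_eq_false hσv⟩

lemma inDegree_le_count {a : ℕ} (ha : ∀ u ∈ L, a ∈ u) {v : List ℕ} (hv : a ∉ v) :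
    inDegree L v ≤ L.count (a :: v) := by
  refine List.countP_mono_left fun u hu huv => ?_
  obtain ⟨b, w, rfl⟩ := List.exists_cons_of_ne_nil (List.ne_nil_of_mem (ha u hu))
  obtain rfl : w = v := of_decide_eq_true huv
  have : a = b := by simpa [hv] using ha _ hu
  simp [this]

lemma le_outDegree {v : List ℕ} (h : ∀ σ < k, v ++ [σ] ∈ L) : k ≤ outDegree L v := by
  have hsub : (List.range k).map (v ++ [·]) ⊆ L.filter (·.dropLast = v) := by
    intro u hu
    obtain ⟨σ, hσ, rfl⟩ := List.mem_map.mp hu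
    simpa using h σ (List.mem_range.mp hσ)
  have hnd : ((List.range k).map (v ++ [·])).Nodup :=
    List.nodup_range.map fun _ _ h => by simpa using h
  simpa [outDegree, List.countP_eq_length_filter] using (hnd.subperm hsub).length_le

end Degrees

structure Invariant (k n : ℕ) (L : List (List ℕ)) : Prop where
  nodup : L.Nodup
  isWord : ∀ u ∈ L, IsWord k n u
  upperClosed : ∀ v σ τ, σ ≤ τ → τ < k → v ++ [σ] ∈ L → v ++ [τ] ∈ L

section Balanced

variable {L : List (List ℕ)}

lemma tail_append_zero_not_mem (hn : 1 ≤ n) (hL : Invariant k n L)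
    (hbal : ∀ v, inDegree L v = outDegree L v) {e : List ℕ} (he : IsWord k n e) (heL : e ∉ L) :
    e.tail ++ [0] ∉ L := by
  obtain ⟨σ, u, rfl⟩ := List.exists_cons_of_length_pos (by rw [he.1]; omega)
  have hσ : σ < k := he.2 σ List.mem_cons_self
  have hin : inDegree L u < k := inDegree_lt hn hL.nodup hL.isWord hσ heL
  intro hu0
  have hout : k ≤ outDegree L u :=
    le_outDegree fun τ hτ => hL.upperClosed u 0 τ (Nat.zero_le τ) hτ hu0
  rw [hbal] at hin
  omega

lemma drop_append_replicate_not_mem (hn : 1 ≤ n) (hL : Invariant k n L)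
    (hbal : ∀ v, inDegree L v = outDegree L v) {e : List ℕ} (he : IsWord k n e) (heL : e ∉ L) :
    ∀ m ≤ n, e.drop m ++ List.replicate m 0 ∉ L := by
  have hk : 0 < k := Nat.zero_lt_of_lt <|
    he.2 _ (List.getLast_mem (List.ne_nil_of_length_pos (by rw [he.1]; omega)))
  intro m hm
  induction m with
  | zero => simpa using heL
  | succ m ih =>
    have hword : IsWord k n (e.drop m ++ List.replicate m 0) := by
      refine ⟨?_, fun σ hσ => ?_⟩
      · simp only [List.length_append, List.length_drop, he.1, List.length_replicate]
        omega
      rcases List.mem_append.mp hσ with h | h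
      · exact he.2 σ (List.mem_of_mem_drop h)
      · rwa [List.eq_of_mem_replicate h]
    have hshift : (e.drop m ++ List.replicate m 0).tail ++ [0]
        = e.drop (m + 1) ++ List.replicate (m + 1) 0 := by
      rw [List.drop_eq_getElem_cons (i := m) (l := e) (by rw [he.1]; omega), List.replicate_succ']
      simp only [List.cons_append, List.tail_cons, List.append_assoc]
    rw [← hshift]
    exact tail_append_zero_not_mem hn hL hbal hword (ih (by omega))

end Balanced

section Walk

def nextSymbol (k n i : ℕ) : ℕ :=
  Nat.findGreatest (fun τ => (preferMax k n i).tail ++ [τ] ∉ preferMaxAux k n i) (k - 1)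

lemma preferMaxAux_zero : preferMaxAux k n 0 = [preferMax k n 0] := rfl

lemma preferMaxAux_succ (i : ℕ) :
    preferMaxAux k n (i + 1) = preferMax k n (i + 1) :: preferMaxAux k n i := rfl

lemma preferMax_zero : preferMax k n 0 = List.replicate (n - 1) 0 ++ [k - 1] := rfl

lemma preferMax_succ (i : ℕ) :
    preferMax k n (i + 1) = (preferMax k n i).tail ++ [nextSymbol k n i] := rfl

lemma length_preferMaxAux : ∀ i, (preferMaxAux k n i).length = i + 1
  | 0 => rfl
  | i + 1 => by rw [preferMaxAux_succ, List.length_cons, length_preferMaxAux i]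

lemma mem_preferMaxAux {u : List ℕ} : ∀ {i}, u ∈ preferMaxAux k n i ↔ ∃ j ≤ i, preferMax k n j = u
  | 0 => by simp [preferMaxAux_zero, eq_comm]
  | i + 1 => by
    simp only [preferMaxAux_succ, List.mem_cons, mem_preferMaxAux, Nat.le_succ_iff]
    constructor
    · rintro (rfl | ⟨j, hj, rfl⟩)
      exacts [⟨i + 1, Or.inr rfl, rfl⟩, ⟨j, Or.inl hj, rfl⟩]
    · rintro ⟨j, hj | rfl, rfl⟩
      exacts [Or.inr ⟨j, hj, rfl⟩, Or.inl rfl]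

lemma preferMax_mem_preferMaxAux {i j : ℕ} (h : j ≤ i) : preferMax k n j ∈ preferMaxAux k n i :=
  mem_preferMaxAux.mpr ⟨j, h, rfl⟩

lemma preferMaxAux_subset {i j : ℕ} (h : i ≤ j) : preferMaxAux k n i ⊆ preferMaxAux k n j :=
  fun _ hu =>
    have ⟨l, hl, hlu⟩ := mem_preferMaxAux.mp hu
    mem_preferMaxAux.mpr ⟨l, hl.trans h, hlu⟩

lemma inDegree_add_ite_eq_outDegree_add_ite (i : ℕ) (v : List ℕ) :
    inDegree (preferMaxAux k n i) v + (if List.replicate (n - 1) 0 = v then 1 else 0)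
      = outDegree (preferMaxAux k n i) v + (if (preferMax k n i).tail = v then 1 else 0) := by
  induction i with
  | zero =>
    rw [preferMaxAux_zero, inDegree_cons, outDegree_cons, preferMax_zero, List.dropLast_concat]
    simp only [inDegree, outDegree, List.countP_nil]
    omega
  | succ i ih =>
    rw [preferMaxAux_succ, inDegree_cons, outDegree_cons, preferMax_succ, List.dropLast_concat]
    split_ifs at ih ⊢ <;> omega

lemma tail_preferMax_eq_replicate {i : ℕ}
    (h : inDegree (preferMaxAux k n i) (preferMax k n i).tail
      ≤ outDegree (preferMaxAux k n i) (preferMax k n i).tail) :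
    (preferMax k n i).tail = List.replicate (n - 1) 0 := by
  have := inDegree_add_ite_eq_outDegree_add_ite (k := k) (n := n) i (preferMax k n i).tail
  rw [if_pos rfl] at this
  by_contra hne
  rw [if_neg (Ne.symm hne)] at this
  omega

lemma inDegree_eq_outDegree {i : ℕ} (h : (preferMax k n i).tail = List.replicate (n - 1) 0)
    (v : List ℕ) : inDegree (preferMaxAux k n i) v = outDegree (preferMaxAux k n i) v := by
  have := inDegree_add_ite_eq_outDegree_add_ite (k := k) (n := n) i v
  rw [h] at this
  omega

end Walk

section Correctness

lemma nextSymbol_lt (hk : 1 ≤ k) (i : ℕ) : nextSymbol k n i < k :=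
  (Nat.findGreatest_le _).trans_lt (by omega)

lemma invariant_preferMaxAux_zero (hk : 1 ≤ k) (hn : 1 ≤ n) :
    Invariant k n (preferMaxAux k n 0) := by
  refine ⟨List.nodup_singleton _, fun u hu => ?_, fun v σ τ hστ hτ hv => ?_⟩
  · rw [preferMaxAux_zero, List.mem_singleton, preferMax_zero] at hu
    exact hu ▸ (isWord_replicate_zero hk (n - 1)).append_singleton hn (by omega)
  · rw [preferMaxAux_zero, List.mem_singleton, preferMax_zero] at hv ⊢
    obtain ⟨rfl, hσ⟩ := List.append_inj' hv rfl
    obtain rfl : τ = k - 1 := by simp only [List.cons.injEq, and_true] at hσ; omega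
    rfl

lemma Invariant.succ (hk : 1 ≤ k) (hn : 1 ≤ n) {i : ℕ} (hL : Invariant k n (preferMaxAux k n i))
    (hunused : ∃ τ < k, (preferMax k n i).tail ++ [τ] ∉ preferMaxAux k n i) :
    Invariant k n (preferMaxAux k n (i + 1)) := by
  obtain ⟨τ₀, hτ₀, hτ₀L⟩ := hunused
  have hnew : preferMax k n (i + 1) ∉ preferMaxAux k n i :=
    Nat.findGreatest_spec (P := fun τ => (preferMax k n i).tail ++ [τ] ∉ preferMaxAux k n i)
      (by omega : τ₀ ≤ k - 1) hτ₀L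
  have hgreatest : ∀ τ, nextSymbol k n i < τ → τ < k →
      (preferMax k n i).tail ++ [τ] ∈ preferMaxAux k n i := fun τ h1 h2 =>
    not_not.mp (Nat.findGreatest_is_greatest h1 (by omega))
  rw [preferMaxAux_succ]
  refine ⟨List.nodup_cons.mpr ⟨hnew, hL.nodup⟩, fun u hu => ?_, fun v σ τ hστ hτ hv => ?_⟩
  · rcases List.mem_cons.mp hu with rfl | hu
    · exact (hL.isWord _ (preferMax_mem_preferMaxAux le_rfl)).tail.append_singleton hn
        (nextSymbol_lt hk i)
    · exact hL.isWord u hu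
  · rcases List.mem_cons.mp hv with hv | hv
    · rw [preferMax_succ] at hv
      obtain ⟨rfl, hσ⟩ := List.append_inj' hv rfl
      obtain rfl : σ = nextSymbol k n i := by simpa using hσ
      rcases hστ.eq_or_lt with rfl | hlt
      · exact List.mem_cons.mpr (Or.inl hv)
      · exact List.mem_cons_of_mem _ (hgreatest τ hlt hτ)
    · exact List.mem_cons_of_mem _ (hL.upperClosed v σ τ hστ hτ hv)

lemma Invariant.mem_of_stuck (hk : 1 ≤ k) (hn : 1 ≤ n) {i : ℕ}
    (hL : Invariant k n (preferMaxAux k n i))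
    (hstuck : ∀ τ < k, (preferMax k n i).tail ++ [τ] ∈ preferMaxAux k n i)
    {u : List ℕ} (hu : IsWord k n u) : u ∈ preferMaxAux k n i := by
  have hrep := tail_preferMax_eq_replicate <|
    (inDegree_le hn hL.nodup hL.isWord _).trans (le_outDegree hstuck)
  by_contra huL
  have h0 := drop_append_replicate_not_mem hn hL (inDegree_eq_outDegree hrep) hu huL n le_rfl
  rw [List.drop_eq_nil_of_le hu.1.le, List.nil_append] at h0
  apply h0
  simpa [hrep, ← List.replicate_succ', Nat.sub_add_cancel hn] using hstuck 0 hk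

lemma exists_tail_append_not_mem (hk : 1 ≤ k) (hn : 1 ≤ n) {i : ℕ}
    (hL : Invariant k n (preferMaxAux k n i)) (hi : i + 1 < k ^ n) :
    ∃ τ < k, (preferMax k n i).tail ++ [τ] ∉ preferMaxAux k n i := by
  by_contra! hstuck
  have hsub : words k n ⊆ preferMaxAux k n i := fun u hu =>
    hL.mem_of_stuck hk hn hstuck (mem_words.mp hu)
  have := ((nodup_words k n).subperm hsub).length_le
  rw [length_words, length_preferMaxAux] at this
  omega

lemma invariant_preferMaxAux (hk : 1 ≤ k) (hn : 1 ≤ n) :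
    ∀ i < k ^ n, Invariant k n (preferMaxAux k n i)
  | 0, _ => invariant_preferMaxAux_zero hk hn
  | i + 1, hi =>
    have hL := invariant_preferMaxAux hk hn i (by omega)
    hL.succ hk hn (exists_tail_append_not_mem hk hn hL hi)

lemma isWord_preferMax (hk : 1 ≤ k) (hn : 1 ≤ n) {i : ℕ} (hi : i < k ^ n) :
    IsWord k n (preferMax k n i) :=
  (invariant_preferMaxAux hk hn i hi).isWord _ (preferMax_mem_preferMaxAux le_rfl)

lemma preferMax_injOn (hk : 1 ≤ k) (hn : 1 ≤ n) :
    Set.InjOn (preferMax k n) (Set.Iio (k ^ n)) := by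
  suffices ∀ i j, i < j → j < k ^ n → preferMax k n i ≠ preferMax k n j by
    intro i hi j hj h
    by_contra hne
    rcases Nat.lt_or_gt_of_ne hne with hij | hji
    exacts [this i j hij hj h, this j i hji hi h.symm]
  intro i j hij hj h
  obtain ⟨j, rfl⟩ := Nat.exists_eq_add_of_lt hij
  have hnd := (invariant_preferMaxAux hk hn _ hj).nodup
  rw [preferMaxAux_succ, List.nodup_cons, ← h] at hnd
  exact hnd.1 (preferMax_mem_preferMaxAux (by omega))

lemma IsWord.exists_preferMax_eq (hk : 1 ≤ k) (hn : 1 ≤ n) {u : List ℕ} (hu : IsWord k n u) :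
    ∃ i < k ^ n, preferMax k n i = u := by
  have hpos : 0 < k ^ n := Nat.pow_pos hk
  have hL := invariant_preferMaxAux hk hn (k ^ n - 1) (by omega)
  have hperm : (preferMaxAux k n (k ^ n - 1)).Perm (words k n) := by
    refine (hL.nodup.subperm fun u hu => mem_words.mpr (hL.isWord u hu)).perm_of_length_le ?_
    rw [length_words, length_preferMaxAux]
    omega
  obtain ⟨i, hi, rfl⟩ := mem_preferMaxAux.mp (hperm.mem_iff.mpr (mem_words.mpr hu))
  exact ⟨i, by omega, rfl⟩

end Correctness

lemma findGreatest_congr {P Q : ℕ → Prop} [DecidablePred P] [DecidablePred Q] :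
    ∀ b, (∀ m ≤ b, (P m ↔ Q m)) → Nat.findGreatest P b = Nat.findGreatest Q b
  | 0, _ => rfl
  | b + 1, h => by
    rw [Nat.findGreatest_succ, Nat.findGreatest_succ, if_congr (h (b + 1) le_rfl) rfl
      (findGreatest_congr b fun m hm => h m (hm.trans b.le_succ))]

lemma findGreatest_not_mem_eq {L L' : List (List ℕ)} {c : List ℕ} {k : ℕ} (hk : 1 ≤ k)
    (htop : c ++ [k] ∈ L') (hiff : ∀ τ < k, c ++ [τ] ∈ L' ↔ c ++ [τ] ∈ L) :
    Nat.findGreatest (fun τ => c ++ [τ] ∉ L') (k + 1 - 1)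
      = Nat.findGreatest (fun τ => c ++ [τ] ∉ L) (k - 1) := by
  obtain ⟨m, rfl⟩ : ∃ m, k = m + 1 := ⟨k - 1, by omega⟩
  rw [Nat.add_sub_cancel, Nat.add_sub_cancel, Nat.findGreatest_of_not (not_not.mpr htop)]
  exact findGreatest_congr m fun τ hτ => not_congr (hiff τ (by omega))

structure IsLastTopStep (k n t : ℕ) : Prop where
  lt_pow : t < (k + 1) ^ n
  top_mem : ∀ u ∈ preferMaxAux (k + 1) n t, k ∈ u
  top_not_mem : k ∉ preferMax (k + 1) n (t + 1)

namespace IsLastTopStep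

variable {t : ℕ}

lemma invariant (hn : 1 ≤ n) (h : IsLastTopStep k n t) :
    Invariant (k + 1) n (preferMaxAux (k + 1) n t) :=
  invariant_preferMaxAux (Nat.le_add_left 1 k) hn t h.lt_pow

lemma tail_eq_replicate (hn : 1 ≤ n) (h : IsLastTopStep k n t) :
    (preferMax (k + 1) n t).tail = List.replicate (n - 1) 0 := by
  have hL := h.invariant hn
  have hsucc := h.top_not_mem
  rw [preferMax_succ, List.mem_append, not_or, List.mem_singleton] at hsucc
  have hlt : nextSymbol (k + 1) n t < k := by
    have := nextSymbol_lt (Nat.le_add_left 1 k) (n := n) t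
    omega
  have htop : (preferMax (k + 1) n t).tail ++ [k] ∈ preferMaxAux (k + 1) n t :=
    not_not.mp (Nat.findGreatest_is_greatest hlt (by simp))
  apply tail_preferMax_eq_replicate
  calc inDegree (preferMaxAux (k + 1) n t) (preferMax (k + 1) n t).tail
      ≤ (preferMaxAux (k + 1) n t).count (k :: (preferMax (k + 1) n t).tail) :=
        inDegree_le_count h.top_mem hsucc.1
    _ ≤ 1 := List.nodup_iff_count_le_one.mp hL.nodup _
    _ ≤ _ := List.countP_pos_iff.mpr ⟨_, htop, by simp⟩

/-- Otherwise shifting the missing edge `v k` shows that the edge `k 0ⁿ⁻¹` is missing, so the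
start vertex has no used in-edge (all used edges contain `k`), hence no used out-edge. -/
lemma append_top_mem (hk : 1 ≤ k) (hn : 1 ≤ n) (h : IsLastTopStep k n t) {v : List ℕ}
    (hv : IsWord k (n - 1) v) : v ++ [k] ∈ preferMaxAux (k + 1) n t := by
  have hL := h.invariant hn
  have hbal := inDegree_eq_outDegree (h.tail_eq_replicate hn)
  have hword := (hv.mono k.le_succ).append_singleton hn k.lt_succ_self
  by_contra hvk
  have hmiss := drop_append_replicate_not_mem hn hL hbal hword hvk (n - 1) (by omega)
  rw [List.drop_append_of_le_length (by rw [hv.1]), List.drop_eq_nil_of_le hv.1.le,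
    List.nil_append, List.singleton_append] at hmiss
  have hin : inDegree (preferMaxAux (k + 1) n t) (List.replicate (n - 1) 0) = 0 := by
    refine Nat.eq_zero_of_le_zero ((inDegree_le_count h.top_mem ?_).trans_eq ?_)
    · exact (isWord_replicate_zero hk _).not_mem
    · exact List.count_eq_zero.mpr hmiss
  have hout : 0 < outDegree (preferMaxAux (k + 1) n t) (List.replicate (n - 1) 0) :=
    List.countP_pos_iff.mpr
      ⟨_, preferMax_mem_preferMaxAux (Nat.zero_le t), by simp [preferMax_zero]⟩
  rw [hbal] at hin
  omega

lemma preferMax_add (hk : 1 ≤ k) (hn : 1 ≤ n) (h : IsLastTopStep k n t) :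
    ∀ j < k ^ n, preferMax (k + 1) n (t + 1 + j) = preferMax k n j ∧
      ∀ u, k ∉ u → (u ∈ preferMaxAux (k + 1) n (t + 1 + j) ↔ u ∈ preferMaxAux k n j) := by
  intro j hj
  induction j with
  | zero =>
    have hrep := isWord_replicate_zero hk (n - 1)
    have hsym : nextSymbol (k + 1) n t = k - 1 := by
      rw [nextSymbol, h.tail_eq_replicate hn,
        findGreatest_not_mem_eq hk (h.append_top_mem hk hn hrep) (L := []) fun τ hτ =>
          iff_of_false (fun hmem => (hrep.append_singleton hn hτ).not_mem (h.top_mem _ hmem))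
            List.not_mem_nil]
      exact Nat.findGreatest_eq List.not_mem_nil
    have hw : preferMax (k + 1) n (t + 1) = preferMax k n 0 := by
      rw [preferMax_succ, h.tail_eq_replicate hn, hsym, preferMax_zero]
    refine ⟨hw, fun u hu => ?_⟩
    rw [Nat.add_zero, preferMaxAux_succ, preferMaxAux_zero, hw, List.mem_cons, List.mem_singleton]
    exact or_iff_left fun hmem => hu (h.top_mem u hmem)
  | succ j ih =>
    obtain ⟨hw, hmem⟩ := ih (by omega)
    have hc := (isWord_preferMax hk hn (show j < k ^ n by omega)).tail
    have hsym : nextSymbol (k + 1) n (t + 1 + j) = nextSymbol k n j := by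
      rw [nextSymbol, nextSymbol, hw]
      refine findGreatest_not_mem_eq hk ?_ fun τ hτ => hmem _ ?_
      · exact preferMaxAux_subset (by omega) (h.append_top_mem hk hn hc)
      · exact (hc.append_singleton hn hτ).not_mem
    have hw' : preferMax (k + 1) n (t + 1 + (j + 1)) = preferMax k n (j + 1) := by
      rw [← Nat.add_assoc, preferMax_succ, preferMax_succ, hw, hsym]
    refine ⟨hw', fun u hu => ?_⟩
    rw [← Nat.add_assoc, preferMaxAux_succ, preferMaxAux_succ, Nat.add_assoc, hw',
      List.mem_cons, List.mem_cons, hmem u hu]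

lemma add_pow_le (hn : 1 ≤ n) (h : IsLastTopStep k n t) :
    t + 1 + k ^ n ≤ (k + 1) ^ n := by
  have hsub : words k n ⊆
      (List.range ((k + 1) ^ n - (t + 1))).map fun j => preferMax (k + 1) n (t + 1 + j) := by
    intro u hu
    have hu := mem_words.mp hu
    obtain ⟨i, hi, rfl⟩ := (hu.mono k.le_succ).exists_preferMax_eq (Nat.le_add_left 1 k) hn
    have hti : t < i := by
      by_contra! hit
      exact hu.not_mem (h.top_mem _ (preferMax_mem_preferMaxAux hit))
    exact List.mem_map.mpr ⟨i - (t + 1), List.mem_range.mpr (by omega), by congr 1; omega⟩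
  have := ((nodup_words k n).subperm hsub).length_le
  rw [length_words, List.length_map, List.length_range] at this
  have := h.lt_pow
  omega

lemma le_add_pow (hk : 1 ≤ k) (hn : 1 ≤ n) (h : IsLastTopStep k n t) :
    (k + 1) ^ n ≤ t + 1 + k ^ n := by
  have hpos : 0 < k ^ n := Nat.pow_pos hk
  by_contra! hlt
  obtain ⟨hw, hmem⟩ := h.preferMax_add hk hn (k ^ n - 1) (by omega)
  obtain ⟨τ, hτ, hτL⟩ := exists_tail_append_not_mem (Nat.le_add_left 1 k) hn
    (invariant_preferMaxAux (Nat.le_add_left 1 k) hn (t + 1 + (k ^ n - 1)) (by omega)) (by omega)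
  have hc := (isWord_preferMax hk hn (show k ^ n - 1 < k ^ n by omega)).tail
  rw [hw] at hτL
  apply hτL
  rcases (Nat.lt_succ_iff.mp hτ).lt_or_eq with hτk | rfl
  · have hword := hc.append_singleton hn hτk
    obtain ⟨i, hi, hwi⟩ := hword.exists_preferMax_eq hk hn
    refine (hmem _ hword.not_mem).mpr ?_
    rw [← hwi]
    exact preferMax_mem_preferMaxAux (by omega)
  · exact preferMaxAux_subset (by omega) (h.append_top_mem hk hn hc)

end IsLastTopStep

lemma exists_isLastTopStep (hk : 1 ≤ k) (hn : 1 ≤ n) : ∃ t, IsLastTopStep k n t := by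
  obtain ⟨i₀, hi₀, hwi₀⟩ := (isWord_replicate_zero (Nat.le_add_left 1 k) n).exists_preferMax_eq
    (Nat.le_add_left 1 k) hn
  have hfree : k ∉ preferMax (k + 1) n i₀ := hwi₀ ▸ (isWord_replicate_zero hk n).not_mem
  have hex : ∃ i, k ∉ preferMax (k + 1) n i := ⟨i₀, hfree⟩
  have hpos : Nat.find hex ≠ 0 := fun h0 => by
    have := Nat.find_spec hex
    rw [h0, preferMax_zero] at this
    simp at this
  refine ⟨Nat.find hex - 1, ?_, fun u hu => ?_, ?_⟩
  · have := Nat.find_min' hex hfree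
    omega
  · obtain ⟨j, hj, rfl⟩ := mem_preferMaxAux.mp hu
    exact not_not.mp (Nat.find_min hex (by omega))
  · rw [Nat.sub_add_cancel (Nat.one_le_iff_ne_zero.mpr hpos)]
    exact Nat.find_spec hex

theorem preferMax_sub_pow_add (hk : 1 ≤ k) (hn : 1 ≤ n) {j : ℕ} (hj : j < k ^ n) :
    preferMax (k + 1) n ((k + 1) ^ n - k ^ n + j) = preferMax k n j := by
  obtain ⟨t, h⟩ := exists_isLastTopStep hk hn
  have h₁ := h.add_pow_le hn
  have h₂ := h.le_add_pow hk hn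
  rw [show (k + 1) ^ n - k ^ n = t + 1 by omega]
  exact (h.preferMax_add hk hn j hj).1

section SymbolString

/-- The `m`-th symbol of the `(k,n)`-prefer-max symbol string: the first symbol of `wₘ`, or, past
the last window, the corresponding symbol of `w_{kⁿ-1}`. -/
def symbol (k n m : ℕ) : ℕ := (preferMax k n (min m (k ^ n - 1))).getD (m - min m (k ^ n - 1)) 0

def symbolString (k n : ℕ) : List ℕ := (List.range (k ^ n + n - 1)).map (symbol k n)

lemma getD_preferMax_add (hk : 1 ≤ k) (hn : 1 ≤ n) {i t : ℕ} :
    ∀ e, i + e < k ^ n → t + e < n →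
      (preferMax k n (i + e)).getD t 0 = (preferMax k n i).getD (t + e) 0
  | 0, _, _ => rfl
  | e + 1, hi, ht => by
    have hlen := (isWord_preferMax hk hn (show i + e < k ^ n by omega)).1
    rw [← Nat.add_assoc, preferMax_succ,
      List.getD_append _ _ _ _ (by simp only [List.length_tail, hlen]; omega),
      List.getD_eq_getElem?_getD, List.getElem?_tail, ← List.getD_eq_getElem?_getD,
      getD_preferMax_add hk hn (t := t + 1) e (by omega) (by omega), Nat.add_right_comm,
      Nat.add_assoc]

lemma symbol_add (hk : 1 ≤ k) (hn : 1 ≤ n) {i t : ℕ} (hi : i < k ^ n) (ht : t < n) :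
    symbol k n (i + t) = (preferMax k n i).getD t 0 := by
  rw [symbol]
  rcases le_or_gt (i + t) (k ^ n - 1) with hle | hgt
  · rw [min_eq_left hle, Nat.sub_self]
    simpa using getD_preferMax_add hk hn (i := i) (t := 0) t (by omega) (by omega)
  · rw [min_eq_right hgt.le]
    have := getD_preferMax_add hk hn (i := i) (t := i + t - (k ^ n - 1)) (k ^ n - 1 - i)
      (by omega) (by omega)
    rw [show i + (k ^ n - 1 - i) = k ^ n - 1 by omega,
      show i + t - (k ^ n - 1) + (k ^ n - 1 - i) = t by omega] at this
    exact this

lemma length_symbolString : (symbolString k n).length = k ^ n + n - 1 := by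
  simp [symbolString]

lemma take_drop_symbolString (hk : 1 ≤ k) (hn : 1 ≤ n) {i : ℕ} (hi : i < k ^ n) :
    ((symbolString k n).drop i).take n = preferMax k n i := by
  have hlen := (isWord_preferMax hk hn hi).1
  refine List.ext_getElem ?_ fun t h₁ h₂ => ?_
  · simp only [List.length_take, List.length_drop, length_symbolString, hlen]
    omega
  have ht : t < n := hlen ▸ h₂
  simp only [List.getElem_take, List.getElem_drop, symbolString, List.getElem_map,
    List.getElem_range]
  rw [symbol_add hk hn hi ht, List.getD_eq_getElem]

lemma symbol_sub_pow_add (hk : 1 ≤ k) (hn : 1 ≤ n) {m : ℕ} (hm : m < k ^ n + n - 1) :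
    symbol (k + 1) n ((k + 1) ^ n - k ^ n + m) = symbol k n m := by
  have hpos : 0 < k ^ n := Nat.pow_pos hk
  have hpow : k ^ n ≤ (k + 1) ^ n := Nat.pow_le_pow_left k.le_succ n
  set i := min m (k ^ n - 1)
  have hi : i < k ^ n := by omega
  have hm' : m = i + (m - i) := by omega
  rw [hm', ← Nat.add_assoc, symbol_add (Nat.le_add_left 1 k) hn (by omega) (by omega),
    preferMax_sub_pow_add hk hn hi, symbol_add hk hn hi (by omega)]

lemma symbolString_isSuffix_succ (hk : 1 ≤ k) (hn : 1 ≤ n) :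
    symbolString k n <:+ symbolString (k + 1) n := by
  have hpos : 0 < k ^ n := Nat.pow_pos hk
  have hpow : k ^ n ≤ (k + 1) ^ n := Nat.pow_le_pow_left k.le_succ n
  rw [symbolString, symbolString,
    show (k + 1) ^ n + n - 1 = ((k + 1) ^ n - k ^ n) + (k ^ n + n - 1) by omega,
    List.range_add, List.map_append]
  have hshift : (List.range (k ^ n + n - 1)).map (symbol k n)
      = ((List.range (k ^ n + n - 1)).map ((k + 1) ^ n - k ^ n + ·)).map (symbol (k + 1) n) := by
    rw [List.map_map]
    exact List.map_congr_left fun m hm => (symbol_sub_pow_add hk hn (List.mem_range.mp hm)).symm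
  rw [hshift]
  exact List.suffix_append _ _

lemma symbolString_isSuffix (hk : 1 ≤ k) (hn : 1 ≤ n) {k' : ℕ} (hkk' : k ≤ k') :
    symbolString k n <:+ symbolString k' n := by
  induction k', hkk' using Nat.le_induction with
  | base => exact List.suffix_rfl
  | succ k' hkk' ih => exact ih.trans (symbolString_isSuffix_succ (hk.trans hkk') hn)

end SymbolString

def onionSeq (n j : ℕ) : ℕ := (symbolString (j + 1) n).reverse.getD j 0

lemma onionSeq_eq_symbol (hk : 1 ≤ k) (hn : 1 ≤ n) {m : ℕ} (hm : m < k ^ n + n - 1) :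
    onionSeq n m = symbol k n (k ^ n + n - 2 - m) := by
  have hm' : m < (m + 1) ^ n + n - 1 := by
    have := Nat.le_self_pow (Nat.one_le_iff_ne_zero.mp hn) (m + 1)
    omega
  have hpre (k' : ℕ) (hk' : 1 ≤ k') (hk'max : k' ≤ max k (m + 1)) :
      (symbolString k' n).reverse <+: (symbolString (max k (m + 1)) n).reverse :=
    List.reverse_prefix.mpr (symbolString_isSuffix hk' hn hk'max)
  rw [onionSeq, List.getD_eq_getElem _ _ (by simpa [length_symbolString] using hm'),
    (hpre (m + 1) (by omega) (le_max_right _ _)).getElem,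
    ← (hpre k hk (le_max_left _ _)).getElem (by simpa [length_symbolString] using hm)]
  simp only [List.getElem_reverse, symbolString, List.getElem_map, List.getElem_range,
    List.length_map, List.length_range]
  congr 1

lemma window_onionSeq (hk : 1 ≤ k) (hn : 1 ≤ n) {i : ℕ} (hi : i < k ^ n) :
    window (onionSeq n) n i = (preferMax k n (k ^ n - 1 - i)).reverse := by
  have hlen := (isWord_preferMax hk hn (show k ^ n - 1 - i < k ^ n by omega)).1
  refine List.ext_getElem (by simp [window, hlen]) fun t h₁ h₂ => ?_
  have ht : t < n := by simpa [window] using h₁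
  simp only [window, List.getElem_map, List.getElem_range, List.getElem_reverse]
  rw [← List.getD_eq_getElem (d := 0), hlen, onionSeq_eq_symbol hk hn (by omega),
    show k ^ n + n - 2 - (i + t) = (k ^ n - 1 - i) + (n - 1 - t) by omega,
    symbol_add hk hn (by omega) (by omega)]

lemma map_range_onionSeq (hk : 1 ≤ k) (hn : 1 ≤ n) :
    (List.range (k ^ n + n - 1)).map (onionSeq n) = (symbolString k n).reverse := by
  refine List.ext_getElem (by simp [length_symbolString]) fun m h₁ _ => ?_
  have hm : m < k ^ n + n - 1 := by simpa using h₁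
  simp only [List.getElem_map, List.getElem_range, List.getElem_reverse, symbolString,
    List.length_map, List.length_range, onionSeq_eq_symbol hk hn hm]
  congr 1

theorem isOnionDeBruijn_onionSeq (hn : 1 ≤ n) : IsOnionDeBruijn (onionSeq n) n := by
  intro k hk
  have hpos : 0 < k ^ n := Nat.pow_pos hk
  refine ⟨fun i hi j hj h => ?_, fun w => ⟨?_, fun hw => ?_⟩⟩
  · rw [window_onionSeq hk hn hi, window_onionSeq hk hn hj, List.reverse_inj] at h
    have := preferMax_injOn hk hn (show k ^ n - 1 - i < k ^ n by omega)
      (show k ^ n - 1 - j < k ^ n by omega) h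
    omega
  · rintro ⟨i, hi, rfl⟩
    rw [window_onionSeq hk hn hi]
    exact (isWord_preferMax hk hn (by omega)).reverse
  · obtain ⟨j, hj, hwj⟩ := IsWord.exists_preferMax_eq hk hn (IsWord.reverse hw)
    refine ⟨k ^ n - 1 - j, by omega, ?_⟩
    rw [window_onionSeq hk hn (by omega), show k ^ n - 1 - (k ^ n - 1 - j) = j by omega, hwj,
      List.reverse_reverse]

end PreferMax

/-- For every `n ≥ 1` there exists an onion De Bruijn sequence of order `n`, and it is
obtained from the prefer-max construction: for every `k ≥ 1`, the reversal of the first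
`k^n + n - 1` symbols of the sequence is the symbol string of the `(k,n)`-prefer-max
cycle, i.e. its window at each position `i < k^n` is the window `wᵢ` of that cycle. -/
theorem exists_onionDeBruijn (n : ℕ) (hn : 1 ≤ n) :
    ∃ x : ℕ → ℕ, IsOnionDeBruijn x n ∧
      ∀ k, 1 ≤ k → ∀ i < k ^ n,
        ((((List.range (k ^ n + n - 1)).map x).reverse.drop i).take n = preferMax k n i) := by
  refine ⟨PreferMax.onionSeq n, PreferMax.isOnionDeBruijn_onionSeq hn, fun k hk i hi => ?_⟩
  rw [PreferMax.map_range_onionSeq hk hn, List.reverse_reverse,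
    PreferMax.take_drop_symbolString hk hn hi]
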